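/- arXiv:1806.00009 — 3 statements merged into one kernel-verified Lean document; each statement's English description precedes it below -/
import Mathlib

section
/- Let B be a Steiner triple system of order w−1 on points {1,...,w−1}, and let D be an i-dimensional subspace of GF(2)^{w−1} orthogonal to the characteristic vector of every block of B. Let M be an i × (w−1) generator matrix for D. Then each of the 2^i − 1 nonzero column vectors of height i occurs exactly w/2^i times as a column of M, and the all-zero column occurs exactly w/2^i − 1 times. In particular, 2^i divides w. -/
/-!
A nonzero word `x` orthogonal to every block of an STS(v) has weight `(v + 1) / 2`: fixing a
point `n` of its support, the blocks through `n` pair off the other points, and `x` differs on the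
two points of each pair. So for every nonzero `c` the `±1`-valued Walsh sum of the word `c ⬝ M`
over the columns is `-1`. After adjoining one phantom zero column, the function counting how often
each vector occurs as a column therefore has vanishing Walsh transform away from `0`, so by Walsh
inversion it is constant, equal to `(v + 1) / 2 ^ i = w / 2 ^ i`.
-/

/-- A Steiner triple system. -/
def IsSTS {V : Type*} [DecidableEq V] (B : Finset (Finset V)) : Prop :=
  (∀ b ∈ B, b.card = 3) ∧
  ∀ p : Finset V, p.card = 2 → ∃! b, b ∈ B ∧ p ⊆ b

open Finset

def signChar : AddChar (ZMod 2) ℤ where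
  toFun a := if a = 0 then 1 else -1
  map_zero_eq_one' := rfl
  map_add_eq_mul' := by decide

lemma signChar_eq_one_sub (a : ZMod 2) : signChar a = 1 - 2 * if a = 1 then 1 else 0 := by
  revert a; decide

section Walsh

variable {ι : Type*} [Fintype ι]

def walshChar (c : ι → ZMod 2) : AddChar (ι → ZMod 2) ℤ where
  toFun d := signChar (c ⬝ᵥ d)
  map_zero_eq_one' := by simp
  map_add_eq_mul' d d' := by simp [dotProduct_add, AddChar.map_add_eq_mul]

lemma walshChar_apply (c d : ι → ZMod 2) : walshChar c d = signChar (c ⬝ᵥ d) := rfl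

lemma walshChar_comm (c d : ι → ZMod 2) : walshChar c d = walshChar d c := by
  rw [walshChar_apply, walshChar_apply, dotProduct_comm]

variable [DecidableEq ι]

lemma walshChar_ne_one {c : ι → ZMod 2} (hc : c ≠ 0) : walshChar c ≠ 1 := by
  obtain ⟨t, ht⟩ := Function.ne_iff.mp hc
  intro h
  have h1 := DFunLike.congr_fun h (Pi.single t 1)
  rw [walshChar_apply, dotProduct_single, mul_one, AddChar.one_apply] at h1
  have hct : c t = 0 := by revert h1; generalize c t = a; revert a; decide
  exact ht hct

lemma sum_walshChar (c : ι → ZMod 2) :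
    ∑ d, walshChar c d = if c = 0 then 2 ^ Fintype.card ι else 0 := by
  split_ifs with hc
  · simp [hc, walshChar_apply]
  · exact AddChar.sum_eq_zero_of_ne_one (walshChar_ne_one hc)

lemma pow_card_mul_eq_sum_of_walsh_eq_zero (f : (ι → ZMod 2) → ℤ)
    (hf : ∀ c ≠ 0, ∑ d, walshChar c d * f d = 0) (d : ι → ZMod 2) :
    2 ^ Fintype.card ι * f d = ∑ d', f d' :=
  calc 2 ^ Fintype.card ι * f d = ∑ d', (∑ c, walshChar (d + d') c) * f d' := by
        have hneg (e : ι → ZMod 2) : -e = e := funext fun t => ZMod.neg_eq_self_mod_two (e t)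
        simp_rw [sum_walshChar, add_eq_zero_iff_eq_neg, hneg, ite_mul,
          zero_mul, sum_ite_eq, mem_univ, if_true]
    _ = ∑ c, walshChar c d * ∑ d', walshChar c d' * f d' := by
        simp_rw [walshChar_comm (d + _), AddChar.map_add_eq_mul (walshChar _), sum_mul, mul_sum,
          mul_assoc]
        exact sum_comm
    _ = ∑ d', f d' := by
        rw [sum_eq_single 0 (fun c _ hc => by rw [hf c hc, mul_zero]) (by simp)]
        simp [walshChar_apply]

end Walsh

namespace IsSTS

variable {V : Type*} [DecidableEq V] {B : Finset (Finset V)}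

lemma exists_third (hB : IsSTS B) {p q : V} (hpq : p ≠ q) :
    ∃ r, r ≠ p ∧ r ≠ q ∧ {p, q, r} ∈ B := by
  obtain ⟨b, ⟨hb, hpqb⟩, -⟩ := hB.2 {p, q} (card_pair hpq)
  obtain ⟨r, hrb, hr⟩ := exists_mem_notMem_of_card_lt_card (s := {p, q}) (t := b)
    (by rw [hB.1 b hb, card_pair hpq]; norm_num)
  simp only [mem_insert, mem_singleton, not_or] at hr
  have hsub : {p, q, r} ⊆ b := insert_subset (hpqb (by simp)) (insert_subset (hpqb (by simp))
    (singleton_subset_iff.mpr hrb))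
  have hcard : b.card ≤ ({p, q, r} : Finset V).card := by
    rw [hB.1 b hb, card_eq_three.mpr ⟨p, q, r, hpq, Ne.symm hr.1, Ne.symm hr.2, rfl⟩]
  exact ⟨r, hr.1, hr.2, eq_of_subset_of_card_le hsub hcard ▸ hb⟩

lemma eq_of_mem_of_mem (hB : IsSTS B) {p q r s : V} (hpr : p ≠ r) (hsp : s ≠ p) (hsr : s ≠ r)
    (hpqr : {p, q, r} ∈ B) (hprs : {p, r, s} ∈ B) : s = q := by
  have hsame : ({p, r, s} : Finset V) = {p, q, r} :=
    (hB.2 {p, r} (card_pair hpr)).unique ⟨hprs, by simp [insert_subset_iff]⟩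
      ⟨hpqr, by simp [insert_subset_iff]⟩
  have hs : s ∈ ({p, q, r} : Finset V) := hsame ▸ by simp
  simpa [hsp, hsr] using hs

variable [Fintype V]

lemma card_support_of_orthogonal (hB : IsSTS B) {x : V → ZMod 2} (hx0 : x ≠ 0)
    (hx : ∀ b ∈ B, ∑ j ∈ b, x j = 0) :
    2 * #{j | x j = 1} = Fintype.card V + 1 := by
  obtain ⟨n, hn⟩ : ∃ n, x n = 1 := by
    obtain ⟨n, hn⟩ : ∃ n, x n ≠ 0 := Function.ne_iff.mp hx0
    exact ⟨n, by revert hn; generalize x n = a; revert a; decide⟩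
  choose! σ hσn hσq hσB using fun q (hq : q ≠ n) => hB.exists_third hq.symm
  have hσσ : ∀ q ≠ n, σ (σ q) = q := fun q hq =>
    hB.eq_of_mem_of_mem (hσn q hq).symm (hσn _ (hσn q hq)) (hσq _ (hσn q hq)) (hσB q hq)
      (hσB _ (hσn q hq))
  have hxσ : ∀ q ≠ n, (x (σ q) = 1 ↔ x q ≠ 1) := by
    intro q hq
    have h := hx _ (hσB q hq)
    rw [sum_insert (by simp [hq.symm, (hσn q hq).symm]), sum_pair (hσq q hq).symm, hn] at h
    revert h; generalize x q = a; generalize x (σ q) = b; revert a b; decide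
  have hne : ∀ q, x q ≠ 1 → q ≠ n := fun q hq h => hq (h ▸ hn)
  have hswap : #(({j | x j = 1} : Finset V).erase n) = #{j | ¬ x j = 1} := by
    apply card_bij' (fun q _ => σ q) (fun q _ => σ q)
    · intro q hq
      simp only [mem_erase, mem_filter, mem_univ, true_and] at hq ⊢
      exact (hxσ q hq.1).not.mpr (not_not.mpr hq.2)
    · intro q hq
      simp only [mem_erase, mem_filter, mem_univ, true_and] at hq ⊢
      exact ⟨hσn q (hne q hq), (hxσ q (hne q hq)).mpr hq⟩
    · intro q hq
      exact hσσ q (mem_erase.mp hq).1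
    · intro q hq
      exact hσσ q (hne q (mem_filter.mp hq).2)
  have hn_mem : n ∈ ({j | x j = 1} : Finset V) := by simp [hn]
  have hsplit := card_filter_add_card_filter_not (s := univ) (fun j => x j = 1)
  rw [card_erase_of_mem hn_mem] at hswap
  have hpos := card_pos.mpr ⟨n, hn_mem⟩
  rw [card_univ] at hsplit
  omega

lemma sum_signChar_of_orthogonal (hB : IsSTS B) {x : V → ZMod 2} (hx0 : x ≠ 0)
    (hx : ∀ b ∈ B, ∑ j ∈ b, x j = 0) : ∑ j, signChar (x j) = -1 := by
  have h := hB.card_support_of_orthogonal hx0 hx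
  simp_rw [signChar_eq_one_sub, sum_sub_distrib, ← mul_sum, sum_boole]
  simp only [sum_const, card_univ, nsmul_eq_mul, mul_one]
  omega

variable {ι : Type*} [Fintype ι]

lemma sum_walshChar_columns (hB : IsSTS B) {M : ι → V → ZMod 2}
    (hM : LinearIndependent (ZMod 2) M) (horth : ∀ t, ∀ b ∈ B, ∑ j ∈ b, M t j = 0)
    {c : ι → ZMod 2} (hc : c ≠ 0) : ∑ j, walshChar c (fun t => M t j) = -1 := by
  have hx0 : ∑ t, c t • M t ≠ 0 := fun h =>
    hc (funext (Fintype.linearIndependent_iff.mp hM c h))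
  have hx : ∀ b ∈ B, ∑ j ∈ b, (∑ t, c t • M t) j = 0 := by
    intro b hb
    simp only [Finset.sum_apply, Pi.smul_apply, smul_eq_mul]
    rw [sum_comm]
    simp [← mul_sum, horth _ b hb]
  rw [← hB.sum_signChar_of_orthogonal hx0 hx]
  simp [walshChar_apply, dotProduct, Finset.sum_apply]

theorem pow_card_mul_card_columns_eq [DecidableEq ι] (hB : IsSTS B) {M : ι → V → ZMod 2}
    (hM : LinearIndependent (ZMod 2) M) (horth : ∀ t, ∀ b ∈ B, ∑ j ∈ b, M t j = 0)
    (d : ι → ZMod 2) :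
    2 ^ Fintype.card ι * (#{j | (fun t => M t j) = d} + if d = 0 then 1 else 0) =
      Fintype.card V + 1 := by
  have hfiber (c : ι → ZMod 2) : ∑ e, walshChar c e * #{j | (fun t => M t j) = e} =
      ∑ j, walshChar c (fun t => M t j) := by
    rw [← sum_fiberwise' univ (fun j t => M t j)]
    simp [mul_comm]
  have key := pow_card_mul_eq_sum_of_walsh_eq_zero
    (fun e => (#{j | (fun t => M t j) = e} + if e = 0 then 1 else 0 : ℤ)) ?_ d
  · have htotal : ∑ e, (#{j | (fun t => M t j) = e} + if e = 0 then 1 else 0 : ℤ) =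
        Fintype.card V + 1 := by
      rw [sum_add_distrib, ← Nat.cast_sum, ← card_eq_sum_card_fiberwise (fun j _ => mem_univ _),
        sum_ite_eq', if_pos (mem_univ _), card_univ]
    exact_mod_cast key.trans htotal
  · intro c hc
    simp only [mul_add, sum_add_distrib, hfiber, hB.sum_walshChar_columns hM horth hc]
    simp

end IsSTS

/-- If `D ≤ GF(2)^{w-1}` is an `i`-dimensional subspace orthogonal to all blocks
of an STS(w−1) `B`, and `M` is an `i × (w−1)` generator matrix for `D`, then each
of the `2^i − 1` nonzero columns of height `i` occurs exactly `w/2^i` times as a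
column of `M`, and the all-zero column occurs `w/2^i − 1` times; in particular
`2^i ∣ w`. -/
theorem dual_generator_matrix_columns_gf2 (w i : ℕ)
    (B : Finset (Finset (Fin (w - 1)))) (hB : IsSTS B)
    (M : Fin i → Fin (w - 1) → ZMod 2)
    (hindep : LinearIndependent (ZMod 2) M)
    (horth : ∀ t : Fin i, ∀ b ∈ B, ∑ j ∈ b, M t j = 0) :
    2 ^ i ∣ w ∧
    (∀ c : Fin i → ZMod 2, c ≠ 0 →
      (Finset.univ.filter (fun j : Fin (w - 1) => (fun t => M t j) = c)).card = w / 2 ^ i) ∧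
    (Finset.univ.filter (fun j : Fin (w - 1) => (fun t => M t j) = 0)).card = w / 2 ^ i - 1 := by
  rcases Nat.eq_zero_or_pos w with rfl | hw
  · have : IsEmpty (Fin i) :=
      ⟨fun t => hindep.ne_zero t (Subsingleton.elim (α := Fin 0 → ZMod 2) _ _)⟩
    simp
  have hcount (d : Fin i → ZMod 2) :
      2 ^ i * (#{j | (fun t => M t j) = d} + if d = 0 then 1 else 0) = w := by
    simpa [Nat.sub_add_cancel hw] using hB.pow_card_mul_card_columns_eq hindep horth d
  have hdiv (d : Fin i → ZMod 2) :
      w / 2 ^ i = #{j | (fun t => M t j) = d} + if d = 0 then 1 else 0 :=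
    Nat.div_eq_of_eq_mul_right (by positivity) (hcount d).symm
  refine ⟨⟨_, (hcount 0).symm⟩, fun c hc => ?_, by simp [hdiv 0]⟩
  simpa [hc] using (hdiv c).symm
end

section
/- Let B be a Steiner triple system on {1,...,w−1} with an i-dimensional dual-orthogonal subspace D ≤ GF(2)^{w−1} (rows of a generator matrix M of D orthogonal to all blocks). Let a be a nonzero column of M, J the set of positions where column a occurs, and K the set of positions where the all-zero column occurs. Then |J| = |K| + 1. -/
open Finset

namespace IsSTS

variable {V : Type*} [DecidableEq V] {B : Finset (Finset V)}

theorem existsUnique_third (hB : IsSTS B) {x y : V} (hxy : x ≠ y) :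
    ∃! z, z ≠ x ∧ z ≠ y ∧ {x, y, z} ∈ B := by
  obtain ⟨b, ⟨hbB, hxyb⟩, hb_unique⟩ := hB.2 {x, y} (card_pair hxy)
  have hcard : #(b \ {x, y}) = 1 := by
    rw [card_sdiff_of_subset hxyb, hB.1 b hbB, card_pair hxy]
  obtain ⟨z, hz⟩ := card_eq_one.mp hcard
  have mem_rest : ∀ u, u ∈ b ∧ u ≠ x ∧ u ≠ y ↔ u = z := fun u => by
    simpa [and_assoc] using congrArg (u ∈ ·) hz
  have hb : {x, y, z} = b := by
    rw [← sdiff_union_of_subset hxyb, hz, union_comm, insert_union, singleton_union]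
  obtain ⟨-, hzx, hzy⟩ := (mem_rest z).mpr rfl
  refine ⟨z, ⟨hzx, hzy, hb ▸ hbB⟩, fun z' ⟨hz'x, hz'y, hz'B⟩ => (mem_rest z').mp ⟨?_, hz'x, hz'y⟩⟩
  rw [← hb_unique _ ⟨hz'B, by intro u; simp; tauto⟩]
  simp

noncomputable def third (hB : IsSTS B) (x y : V) : V :=
  if h : x = y then x else (hB.existsUnique_third h).exists.choose

variable {x y z : V}

theorem third_spec (hB : IsSTS B) (hxy : x ≠ y) :
    hB.third x y ≠ x ∧ hB.third x y ≠ y ∧ {x, y, hB.third x y} ∈ B := by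
  rw [third, dif_neg hxy]
  exact (hB.existsUnique_third hxy).exists.choose_spec

theorem eq_third (hB : IsSTS B) (hxy : x ≠ y) (hzx : z ≠ x) (hzy : z ≠ y)
    (hz : {x, y, z} ∈ B) : z = hB.third x y :=
  (hB.existsUnique_third hxy).unique ⟨hzx, hzy, hz⟩ (hB.third_spec hxy)

theorem third_third (hB : IsSTS B) (hxy : x ≠ y) : hB.third x (hB.third x y) = y := by
  obtain ⟨hx, hy, hmem⟩ := hB.third_spec hxy
  refine (hB.eq_third hx.symm hxy.symm hy.symm ?_).symm
  rwa [pair_comm]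

variable {A : Type*} [AddCommGroup A] [Module (ZMod 2) A] {f : V → A}

theorem map_third (hB : IsSTS B) (hf : ∀ b ∈ B, ∑ j ∈ b, f j = 0) (hxy : x ≠ y) :
    f (hB.third x y) = f x + f y := by
  obtain ⟨hx, hy, hmem⟩ := hB.third_spec hxy
  have hsum := hf _ hmem
  rw [sum_insert (by simp [hxy, hx.symm]), sum_insert (by simp [hy.symm]), sum_singleton,
    ← add_assoc, add_eq_zero_iff_eq_neg', ZModModule.neg_eq_self] at hsum
  exact hsum

theorem card_fiber_eq_card_zeros_add_one [Fintype V] [DecidableEq A] (hB : IsSTS B)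
    (hf : ∀ b ∈ B, ∑ j ∈ b, f j = 0) {x₀ : V} (hx₀ : f x₀ ≠ 0) :
    #{j | f j = f x₀} = #{j | f j = 0} + 1 := by
  have ne_of_zero : ∀ {k}, f k = 0 → k ≠ x₀ := fun hk h => hx₀ (h ▸ hk)
  rw [← card_erase_add_one (mem_filter.mpr ⟨mem_univ x₀, (rfl : f x₀ = f x₀)⟩)]
  congr 1
  refine card_nbij' (hB.third x₀) (hB.third x₀) ?_ ?_ ?_ ?_
  · intro j hj
    obtain ⟨hjx₀, hj⟩ := mem_erase.mp hj
    rw [mem_coe, mem_filter, hB.map_third hf hjx₀.symm, (mem_filter.mp hj).2,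
      ZModModule.add_self]
    exact ⟨mem_univ _, rfl⟩
  · intro k hk
    have hx₀k : x₀ ≠ k := (ne_of_zero (mem_filter.mp hk).2).symm
    rw [mem_coe, mem_erase, mem_filter, hB.map_third hf hx₀k, (mem_filter.mp hk).2, add_zero]
    exact ⟨(hB.third_spec hx₀k).1, mem_univ _, rfl⟩
  · intro j hj
    exact hB.third_third (mem_erase.mp hj).1.symm
  · intro k hk
    exact hB.third_third (ne_of_zero (mem_filter.mp hk).2).symm

end IsSTS

theorem nonzero_column_count_gf2_general (w i : ℕ)
    (B : Finset (Finset (Fin (w - 1)))) (hB : IsSTS B)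
    (M : Fin i → Fin (w - 1) → ZMod 2)
    (horth : ∀ t : Fin i, ∀ b ∈ B, ∑ j ∈ b, M t j = 0)
    (a : Fin i → ZMod 2) (ha : a ≠ 0)
    (j₀ : Fin (w - 1)) (hj₀ : (fun t => M t j₀) = a) :
    (Finset.univ.filter (fun j : Fin (w - 1) => (fun t => M t j) = a)).card =
      (Finset.univ.filter (fun j : Fin (w - 1) => (fun t => M t j) = 0)).card + 1 := by
  subst hj₀
  refine hB.card_fiber_eq_card_zeros_add_one (f := fun j t => M t j) (fun b hb => ?_) ha
  ext t
  simpa [Finset.sum_apply] using horth t b hb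

/-- Let `M` be a rank-`i` matrix over GF(2) whose rows are orthogonal to all
blocks of an STS on `{1,…,w−1}`. If `a` is a nonzero column of `M`, `J` the set
of positions where column `a` occurs and `K` the set of positions where the
all-zero column occurs, then `|J| = |K| + 1`. -/
theorem nonzero_column_count_gf2 (w i : ℕ)
    (B : Finset (Finset (Fin (w - 1)))) (hB : IsSTS B)
    (M : Fin i → Fin (w - 1) → ZMod 2)
    (hindep : LinearIndependent (ZMod 2) M)
    (horth : ∀ t : Fin i, ∀ b ∈ B, ∑ j ∈ b, M t j = 0)
    (a : Fin i → ZMod 2) (ha : a ≠ 0)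
    (j₀ : Fin (w - 1)) (hj₀ : (fun t => M t j₀) = a) :
    (Finset.univ.filter (fun j : Fin (w - 1) => (fun t => M t j) = a)).card =
      (Finset.univ.filter (fun j : Fin (w - 1) => (fun t => M t j) = 0)).card + 1 :=
  nonzero_column_count_gf2_general w i B hB M horth a ha j₀ hj₀
end

section
/- If a Steiner triple system of order v has 2-rank strictly less than v, then v + 1 is even and the system contains a proper subsystem on exactly (v−1)/2 points (a subset S' of points of size (v−1)/2 such that every block meeting S' in at least two points is contained in S'). -/
/-!
A nonzero `r ∈ GF(2)^v` orthogonal to every block satisfies `r t = r p + r q` on each block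
`{p, q, t}`. Hence its zero set `Z` is closed under completing blocks, and for any `p` with
`r p = 1` the map sending `q` to the third point of the block through `p` and `q` is an
involution of the other points exchanging `Z` with the rest of the support. So
`|supp r| - 1 = |Z|`, i.e. `v = 2 |Z| + 1`.
-/

open Finset Module Submodule

theorem exists_ne_zero_dotProduct_eq_zero_of_finrank_span_lt {K ι : Type*} [Field K]
    [Fintype ι] [DecidableEq ι] {s : Set (ι → K)} (h : finrank K (span K s) < Fintype.card ι) :
    ∃ r : ι → K, r ≠ 0 ∧ ∀ x ∈ s, r ⬝ᵥ x = 0 := by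
  have hlt : span K s < ⊤ := lt_top_iff_ne_top.2 fun htop => by
    rw [htop, finrank_top, finrank_fintype_fun_eq_card] at h
    exact lt_irrefl _ h
  obtain ⟨f, hf0, hf⟩ := exists_dual_map_eq_bot_of_lt_top hlt inferInstance
  refine ⟨(dotProductEquiv K ι).symm f, by simpa using hf0, fun x hx => ?_⟩
  have hfx : f x = 0 := LinearMap.mem_ker.1 (LinearMap.le_ker_iff_map.2 hf (subset_span hx))
  rwa [← (dotProductEquiv K ι).apply_symm_apply f] at hfx

theorem dotProduct_indicator {R ι : Type*} [CommSemiring R] [Fintype ι] [DecidableEq ι]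
    (r : ι → R) (b : Finset ι) : r ⬝ᵥ (fun j => if j ∈ b then 1 else 0) = ∑ j ∈ b, r j := by
  simp [dotProduct, mul_ite, sum_ite_mem]

variable {V : Type*} [DecidableEq V]

open Classical in
noncomputable def thirdPoint (B : Finset (Finset V)) (p q : V) : V :=
  if h : ∃ t, t ≠ p ∧ t ≠ q ∧ {p, q, t} ∈ B then h.choose else p

namespace IsSTS

variable {B : Finset (Finset V)} {b : Finset V} {p q : V}

theorem exists_insert_insert_singleton_mem (hB : IsSTS B) (hpq : p ≠ q) :
    ∃ t, t ≠ p ∧ t ≠ q ∧ {p, q, t} ∈ B := by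
  obtain ⟨b, ⟨hb, hpqb⟩, -⟩ := hB.2 {p, q} (card_pair hpq)
  obtain ⟨t, ht⟩ : ∃ t, b \ {p, q} = {t} := by
    rw [← card_eq_one, card_sdiff_of_subset hpqb, hB.1 b hb, card_pair hpq]
  have htb : t ∈ b \ {p, q} := ht ▸ mem_singleton_self t
  simp only [mem_sdiff, mem_insert, mem_singleton, not_or] at htb
  refine ⟨t, htb.2.1, htb.2.2, ?_⟩
  rwa [← union_sdiff_of_subset hpqb, ht, insert_union, singleton_union] at hb

theorem thirdPoint_spec (hB : IsSTS B) (hpq : p ≠ q) :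
    thirdPoint B p q ≠ p ∧ thirdPoint B p q ≠ q ∧ {p, q, thirdPoint B p q} ∈ B := by
  have h := hB.exists_insert_insert_singleton_mem hpq
  rw [thirdPoint, dif_pos h]
  exact h.choose_spec

theorem eq_insert_thirdPoint (hB : IsSTS B) (hb : b ∈ B) (hp : p ∈ b) (hq : q ∈ b)
    (hpq : p ≠ q) : b = {p, q, thirdPoint B p q} :=
  (hB.2 {p, q} (card_pair hpq)).unique ⟨hb, insert_subset hp (singleton_subset_iff.2 hq)⟩
    ⟨(hB.thirdPoint_spec hpq).2.2, by simp [insert_subset_iff]⟩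

theorem thirdPoint_thirdPoint (hB : IsSTS B) (hpq : p ≠ q) :
    thirdPoint B p (thirdPoint B p q) = q := by
  obtain ⟨htp, htq, hb⟩ := hB.thirdPoint_spec hpq
  obtain ⟨htp', htt', -⟩ := hB.thirdPoint_spec htp.symm
  have hmem : thirdPoint B p (thirdPoint B p q) ∈ ({p, q, thirdPoint B p q} : Finset V) := by
    rw [hB.eq_insert_thirdPoint hb (by simp) (by simp) htp.symm]
    simp
  simpa [htp', htt'] using hmem

variable {r : V → ZMod 2}

theorem apply_thirdPoint (hB : IsSTS B) (hr : ∀ b ∈ B, ∑ j ∈ b, r j = 0) (hpq : p ≠ q) :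
    r (thirdPoint B p q) = r p + r q := by
  obtain ⟨htp, htq, hb⟩ := hB.thirdPoint_spec hpq
  have h := hr _ hb
  rw [sum_insert (by simp [hpq, htp.symm]), sum_insert (by simp [htq.symm]), sum_singleton,
    ← add_assoc] at h
  rw [eq_neg_of_add_eq_zero_right h, ZMod.neg_eq_self_mod_two]

variable [Fintype V]

theorem subset_filter_eq_zero (hB : IsSTS B) (hr : ∀ b ∈ B, ∑ j ∈ b, r j = 0) (hb : b ∈ B)
    (h2 : 2 ≤ #(b ∩ ({j | r j = 0} : Finset V))) : b ⊆ ({j | r j = 0} : Finset V) := by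
  obtain ⟨j, hj, k, hk, hjk⟩ := one_lt_card.1 h2
  simp only [mem_inter, mem_filter, mem_univ, true_and] at hj hk
  intro l hl
  rw [hB.eq_insert_thirdPoint hb hj.1 hk.1 hjk] at hl
  simp only [mem_insert, mem_singleton] at hl
  rcases hl with rfl | rfl | rfl <;> simp [hj.2, hk.2, hB.apply_thirdPoint hr hjk]

theorem two_mul_card_filter_eq_zero_add_one (hB : IsSTS B) (hr : ∀ b ∈ B, ∑ j ∈ b, r j = 0)
    (hr0 : r ≠ 0) : 2 * #{j | r j = 0} + 1 = Fintype.card V := by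
  obtain ⟨p, hp⟩ : ∃ p, r p ≠ 0 := Function.ne_iff.1 hr0
  have hp1 : r p = 1 := Fin.eq_one_of_ne_zero _ hp
  have hne {a : V} (ha : r a = 0) : p ≠ a := fun h => hp (h ▸ ha)
  have hswap : #(({j | r j ≠ 0} : Finset V).erase p) = #{j | r j = 0} := by
    refine card_nbij' (thirdPoint B p) (thirdPoint B p) (fun a ha => ?_) (fun a ha => ?_)
      (fun a ha => hB.thirdPoint_thirdPoint (Ne.symm (mem_erase.1 (mem_coe.1 ha)).1))
      (fun a ha => hB.thirdPoint_thirdPoint (hne (mem_filter.1 (mem_coe.1 ha)).2))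
    · simp only [mem_coe, mem_erase, mem_filter, mem_univ, true_and] at ha
      simp [hB.apply_thirdPoint hr (Ne.symm ha.1), hp1, Fin.eq_one_of_ne_zero _ ha.2]
      decide
    · simp only [mem_coe, mem_filter, mem_univ, true_and] at ha
      simp [(hB.thirdPoint_spec (hne ha)).1, hB.apply_thirdPoint hr (hne ha), hp1, ha]
  have hpart : #{j | r j = 0} + #{j | r j ≠ 0} = Fintype.card V :=
    card_filter_add_card_filter_not _
  have hpos : 0 < #({j | r j ≠ 0} : Finset V) := card_pos.2 ⟨p, by simpa using hp⟩
  rw [card_erase_of_mem (by simpa using hp)] at hswap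
  omega

end IsSTS

/-- If an STS(v) has 2-rank strictly less than `v`, then `v + 1` is even and the
system contains a proper subsystem on exactly `(v−1)/2` points: a set `S'` of
`(v−1)/2` points such that every block meeting `S'` in at least two points is
contained in `S'`. -/
theorem nonfull_two_rank_subsystem (v : ℕ)
    (B : Finset (Finset (Fin v))) (hB : IsSTS B)
    (hrank : Module.finrank (ZMod 2)
      (Submodule.span (ZMod 2)
        ((fun b : Finset (Fin v) => fun j => if j ∈ b then (1 : ZMod 2) else 0) '' ↑B)) < v) :
    Even (v + 1) ∧
    ∃ S' : Finset (Fin v), S'.card = (v - 1) / 2 ∧ S' ≠ Finset.univ ∧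
      ∀ b ∈ B, 2 ≤ (b ∩ S').card → b ⊆ S' := by
  obtain ⟨r, hr0, hr⟩ := exists_ne_zero_dotProduct_eq_zero_of_finrank_span_lt
    (by rwa [Fintype.card_fin])
  have hsum : ∀ b ∈ B, ∑ j ∈ b, r j = 0 := fun b hb => by
    simpa only [dotProduct_indicator] using hr _ ⟨b, hb, rfl⟩
  have hcard := hB.two_mul_card_filter_eq_zero_add_one hsum hr0
  rw [Fintype.card_fin] at hcard
  refine ⟨⟨#{j | r j = 0} + 1, by omega⟩, ({j | r j = 0} : Finset (Fin v)), by omega,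
    fun h => ?_, fun b hb => hB.subset_filter_eq_zero hsum hb⟩
  have := (card_eq_iff_eq_univ _).2 h
  rw [Fintype.card_fin] at this
  omega
end
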